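/- Let B and A be nonempty finite sets and Φ_max(x) = Σ_{b∈B} max_{a∈A} x(b,a) for x : B × A → ℝ. Let M be a nonempty finite set of messages and O a nonempty finite set of observations partitioned into clusters O_m (o ∼ m means o ∈ O_m). Let d : M → ℝ be nonnegative weights with Σ_m d(m) = 1, and for each m let d̄_m : O_m → ℝ be nonnegative weights with Σ_{o∼m} d̄_m(o) = 1. For each o let q(o) : B × A → ℝ be a nonzero vector with 0 ≤ q(o)(b,a) ≤ Q_max, and for each m let H_m = Σ_{o∼m} d̄_m(o)·q(o), assumed nonzero. With ε(o) = 1 − ⟪q(o),H_m⟫/(‖q(o)‖₂·‖H_m‖₂) for o ∼ m, and ε = Σ_{m∈M} d(m) Σ_{o∼m} d̄_m(o)·ε(o), it holds that Σ_{m∈M} d(m)·( Σ_{o∼m} d̄_m(o)·Φ_max(q(o)) − Φ_max(H_m) ) ≤ |B|·√(2|A|) · Q_max · √ε. -/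

import Mathlib

open RealInnerProductSpace

/-- The maximization functional `Φ_max(x) = Σ_{b ∈ B} max_{a ∈ A} x (b, a)`. -/
noncomputable def PhiMax {B A : Type*} [Fintype B] [Fintype A] [Nonempty A]
    (x : B × A → ℝ) : ℝ :=
  ∑ b, Finset.univ.sup' Finset.univ_nonempty fun a => x (b, a)

/-!
Replace each `q o` in cluster `m` by its projection `t_o • H_m` onto the line through the cluster
centre, `t_o = ⟪q o, H_m⟫ / ‖H_m‖²`. As `H_m` is the `d̄_m`-average of the `q o`, the `t_o` average
to `1`, so by positive homogeneity of `Φ_max` the gap of the cluster is the average of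
`Φ_max (q o) - Φ_max (t_o • H_m)`. Now `Φ_max` is `√|B|`-Lipschitz for the Euclidean norm, and the
projection error is `‖q o‖ sin θ ≤ √(2 ε(o)) ‖q o‖ ≤ √(2 ε(o)) √(|B| |A|) Q_max`. Concavity of `√`,
used once inside each cluster and once across clusters, bounds the average of `√ε(o)` by `√ε`.
-/

open Finset

theorem EuclideanSpace.norm_le_sqrt_card_mul {ι : Type*} [Fintype ι] (x : EuclideanSpace ℝ ι)
    {C : ℝ} (hC : 0 ≤ C) (hx : ∀ i, |x i| ≤ C) : ‖x‖ ≤ √(Fintype.card ι) * C := by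
  have hsq : ‖x‖ ^ 2 ≤ (√(Fintype.card ι) * C) ^ 2 := by
    rw [EuclideanSpace.norm_sq_eq, mul_pow, Real.sq_sqrt (Nat.cast_nonneg _)]
    calc ∑ i, ‖x i‖ ^ 2 ≤ ∑ _i : ι, C ^ 2 := by
          gcongr with i
          exact (Real.norm_eq_abs _).trans_le (hx i)
      _ = _ := by simp
  exact (pow_le_pow_iff_left₀ (norm_nonneg _) (by positivity) two_ne_zero).1 hsq

theorem EuclideanSpace.inner_nonneg_of_nonneg {ι : Type*} [Fintype ι] {x y : EuclideanSpace ℝ ι}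
    (hx : ∀ i, 0 ≤ x i) (hy : ∀ i, 0 ≤ y i) : 0 ≤ ⟪x, y⟫ := by
  rw [PiLp.inner_apply]
  exact sum_nonneg fun i _ => by simpa using mul_nonneg (hy i) (hx i)

theorem sum_mul_sqrt_le_sqrt_sum_mul {ι : Type*} {s : Finset ι} {w f : ι → ℝ}
    (hw : ∀ i ∈ s, 0 ≤ w i) (hw1 : ∑ i ∈ s, w i = 1) (hf : ∀ i ∈ s, 0 ≤ f i) :
    ∑ i ∈ s, w i * √(f i) ≤ √(∑ i ∈ s, w i * f i) :=
  Real.strictConcaveOn_sqrt.concaveOn.le_map_sum hw hw1 hf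

section CosDist

variable {E : Type*} [NormedAddCommGroup E] [InnerProductSpace ℝ E]

noncomputable def cosDist (x y : E) : ℝ := 1 - ⟪x, y⟫ / (‖x‖ * ‖y‖)

theorem cosDist_nonneg (x y : E) : 0 ≤ cosDist x y :=
  sub_nonneg.2 (div_le_one_of_le₀ (real_inner_le_norm x y) (by positivity))

theorem norm_sub_inner_div_smul_le (x y : E) :
    ‖x - (⟪x, y⟫ / ‖y‖ ^ 2) • y‖ ≤ √(2 * cosDist x y) * ‖x‖ := by
  suffices ‖x - (⟪x, y⟫ / ‖y‖ ^ 2) • y‖ ^ 2 ≤ 2 * cosDist x y * ‖x‖ ^ 2 by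
    rw [← Real.sqrt_sq (norm_nonneg x), ← Real.sqrt_mul (by linarith [cosDist_nonneg x y]),
      ← Real.sqrt_sq (norm_nonneg (x - _))]
    exact Real.sqrt_le_sqrt this
  rcases eq_or_ne x 0 with rfl | hx
  · simp
  rcases eq_or_ne y 0 with rfl | hy
  · simpa [cosDist] using le_mul_of_one_le_left (sq_nonneg ‖x‖) one_le_two
  have hlhs : ‖x - (⟪x, y⟫ / ‖y‖ ^ 2) • y‖ ^ 2 = ‖x‖ ^ 2 - (⟪x, y⟫ / ‖y‖) ^ 2 := by
    rw [norm_sub_sq_real, real_inner_smul_right, norm_smul, Real.norm_eq_abs, mul_pow, sq_abs]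
    field_simp
    ring
  have hrhs : 2 * cosDist x y * ‖x‖ ^ 2 = 2 * ‖x‖ ^ 2 - 2 * (⟪x, y⟫ / ‖y‖) * ‖x‖ := by
    rw [cosDist]
    field_simp
  rw [hlhs, hrhs]
  nlinarith [sq_nonneg (‖x‖ - ⟪x, y⟫ / ‖y‖)]

theorem sum_mul_inner_div_norm_sq_eq_one {ι : Type*} (s : Finset ι) (w : ι → ℝ) (v : ι → E)
    {y : E} (hy : y = ∑ i ∈ s, w i • v i) (hy0 : y ≠ 0) :
    ∑ i ∈ s, w i * (⟪v i, y⟫ / ‖y‖ ^ 2) = 1 := by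
  simp_rw [← mul_div_assoc, ← sum_div, ← real_inner_smul_left, ← sum_inner, ← hy,
    real_inner_self_eq_norm_sq]
  exact div_self (pow_ne_zero 2 (norm_ne_zero_iff.2 hy0))

end CosDist

section PhiMax

variable {B A : Type*} [Fintype B] [Fintype A] [Nonempty A]

theorem phiMax_smul {t : ℝ} (ht : 0 ≤ t) (x : B × A → ℝ) : PhiMax (t • x) = t * PhiMax x := by
  simp only [PhiMax, Pi.smul_apply, smul_eq_mul, mul_sum, mul₀_sup' ht]

theorem phiMax_add_le (x y : B × A → ℝ) : PhiMax (x + y) ≤ PhiMax x + PhiMax y := by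
  simp only [PhiMax, ← sum_add_distrib]
  gcongr with b
  exact sup'_le _ _ fun a ha =>
    add_le_add (le_sup' (fun a => x (b, a)) ha) (le_sup' (fun a => y (b, a)) ha)

theorem phiMax_le_sqrt_card_mul_norm (x : EuclideanSpace ℝ (B × A)) :
    PhiMax x ≤ √(Fintype.card B) * ‖x‖ := by
  choose a ha using fun b => exists_mem_eq_sup' univ_nonempty fun a => x (b, a)
  have hrow : ∀ b, x (b, a b) ^ 2 ≤ ∑ a', x (b, a') ^ 2 := fun b =>
    single_le_sum (f := fun a' => x (b, a') ^ 2) (fun _ _ => sq_nonneg _) (mem_univ _)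
  calc PhiMax x = ∑ b, x (b, a b) := sum_congr rfl fun b _ => (ha b).2
    _ ≤ √((∑ b, x (b, a b)) ^ 2) := (le_abs_self _).trans_eq (Real.sqrt_sq_eq_abs _).symm
    _ ≤ √(Fintype.card B * ∑ b, x (b, a b) ^ 2) := by
      gcongr
      simpa using sq_sum_le_card_mul_sum_sq (s := univ)
    _ ≤ √(Fintype.card B * ‖x‖ ^ 2) := by
      gcongr
      simp only [EuclideanSpace.norm_sq_eq, Real.norm_eq_abs, sq_abs, Fintype.sum_prod_type]
      exact sum_le_sum fun b _ => hrow b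
    _ = √(Fintype.card B) * ‖x‖ := by
      rw [Real.sqrt_mul (Nat.cast_nonneg _), Real.sqrt_sq (norm_nonneg _)]

theorem phiMax_sub_le (x y : EuclideanSpace ℝ (B × A)) :
    PhiMax x - PhiMax y ≤ √(Fintype.card B) * ‖x - y‖ := by
  have hadd := phiMax_add_le (x - y).ofLp y.ofLp
  rw [← WithLp.ofLp_add, sub_add_cancel] at hadd
  linarith [phiMax_le_sqrt_card_mul_norm (x - y)]

theorem phiMax_sub_inner_div_mul_le (x y : EuclideanSpace ℝ (B × A)) (hxy : 0 ≤ ⟪x, y⟫) :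
    PhiMax x - ⟪x, y⟫ / ‖y‖ ^ 2 * PhiMax y
      ≤ √(Fintype.card B) * (√(2 * cosDist x y) * ‖x‖) := by
  rw [← phiMax_smul (by positivity), ← WithLp.ofLp_smul]
  exact (phiMax_sub_le _ _).trans (by gcongr; exact norm_sub_inner_div_smul_le x y)

theorem sum_mul_phiMax_sub_phiMax_le {ι : Type*} (s : Finset ι) {w : ι → ℝ}
    (hw : ∀ i ∈ s, 0 ≤ w i) {v : ι → EuclideanSpace ℝ (B × A)}
    (hv : ∀ i ∈ s, ∀ j ∈ s, 0 ≤ ⟪v i, v j⟫) {R : ℝ} (hR : ∀ i ∈ s, ‖v i‖ ≤ R)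
    {y : EuclideanSpace ℝ (B × A)} (hy : y = ∑ i ∈ s, w i • v i) (hy0 : y ≠ 0) :
    ∑ i ∈ s, w i * PhiMax (v i) - PhiMax y
      ≤ √(2 * Fintype.card B) * R * ∑ i ∈ s, w i * √(cosDist (v i) y) := by
  have hinner : ∀ i ∈ s, 0 ≤ ⟪v i, y⟫ := fun i hi => by
    rw [hy, inner_sum]
    exact sum_nonneg fun j hj => by
      rw [real_inner_smul_right]
      exact mul_nonneg (hw j hj) (hv i hi j hj)
  have hsplit : ∑ i ∈ s, w i * PhiMax (v i) - PhiMax y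
      = ∑ i ∈ s, w i * (PhiMax (v i) - ⟪v i, y⟫ / ‖y‖ ^ 2 * PhiMax y) := by
    simp only [mul_sub, sum_sub_distrib, ← mul_assoc, ← sum_mul,
      sum_mul_inner_div_norm_sq_eq_one s w v hy hy0, one_mul]
  rw [hsplit, mul_sum]
  refine sum_le_sum fun i hi => ?_
  rw [mul_left_comm]
  refine mul_le_mul_of_nonneg_left ?_ (hw i hi)
  calc PhiMax (v i) - ⟪v i, y⟫ / ‖y‖ ^ 2 * PhiMax y
      ≤ √(Fintype.card B) * (√(2 * cosDist (v i) y) * ‖v i‖) :=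
        phiMax_sub_inner_div_mul_le _ _ (hinner i hi)
    _ ≤ √(Fintype.card B) * (√(2 * cosDist (v i) y) * R) := by gcongr; exact hR i hi
    _ = √(2 * Fintype.card B) * R * √(cosDist (v i) y) := by
      rw [Real.sqrt_mul zero_le_two, Real.sqrt_mul zero_le_two]
      ring

theorem sum_mul_phiMax_sub_phiMax_le_of_mem_Icc {ι : Type*} (s : Finset ι) {w : ι → ℝ}
    (hw : ∀ i ∈ s, 0 ≤ w i) {v : ι → EuclideanSpace ℝ (B × A)} {Q : ℝ} (hQ : 0 ≤ Q)
    (hv : ∀ i ∈ s, ∀ p, v i p ∈ Set.Icc 0 Q)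
    {y : EuclideanSpace ℝ (B × A)} (hy : y = ∑ i ∈ s, w i • v i) (hy0 : y ≠ 0) :
    ∑ i ∈ s, w i * PhiMax (v i) - PhiMax y
      ≤ Fintype.card B * √(2 * Fintype.card A) * Q * ∑ i ∈ s, w i * √(cosDist (v i) y) := by
  have hconst : √(2 * Fintype.card B) * (√(Fintype.card (B × A)) * Q)
      = Fintype.card B * √(2 * Fintype.card A) * Q := by
    rw [← mul_assoc, ← Real.sqrt_mul (by positivity), Fintype.card_prod, Nat.cast_mul,
      show (2 * Fintype.card B * (Fintype.card B * Fintype.card A) : ℝ)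
        = Fintype.card B ^ 2 * (2 * Fintype.card A) by ring,
      Real.sqrt_mul (by positivity), Real.sqrt_sq (Nat.cast_nonneg _)]
  rw [← hconst]
  refine sum_mul_phiMax_sub_phiMax_le s hw (fun i hi j hj => ?_) (fun i hi => ?_) hy hy0
  · exact EuclideanSpace.inner_nonneg_of_nonneg (hv i hi · |>.1) (hv j hj · |>.1)
  · exact EuclideanSpace.norm_le_sqrt_card_mul _ hQ fun p =>
      (abs_of_nonneg (hv i hi p).1).trans_le (hv i hi p).2

end PhiMax

theorem clustering_return_gap_bound_general {B A : Type*} [Fintype B] [Fintype A]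
    [Nonempty B] [Nonempty A]
    {M O : Type*} [Fintype M] [DecidableEq M] [Fintype O] [Nonempty O]
    (c : O → M) (Qmax : ℝ)
    (q : O → EuclideanSpace ℝ (B × A))
    (hq : ∀ o ba, 0 ≤ q o ba ∧ q o ba ≤ Qmax)
    (dM : M → ℝ) (hdM : ∀ m, 0 ≤ dM m) (hdMsum : ∑ m, dM m = 1)
    (dbar : M → O → ℝ) (hdbar : ∀ m o, 0 ≤ dbar m o)
    (hdbarsum : ∀ m, ∑ o ∈ Finset.univ.filter (fun o => c o = m), dbar m o = 1)
    (H : M → EuclideanSpace ℝ (B × A))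
    (hH : ∀ m, H m = ∑ o ∈ Finset.univ.filter (fun o => c o = m), dbar m o • q o)
    (hH0 : ∀ m, H m ≠ 0)
    (ε : O → ℝ) (hε : ∀ o, ε o = 1 - ⟪q o, H (c o)⟫ / (‖q o‖ * ‖H (c o)‖))
    (εbar : ℝ)
    (hεbar : εbar = ∑ m, dM m *
      ∑ o ∈ Finset.univ.filter (fun o => c o = m), dbar m o * ε o) :
    ∑ m, dM m * ((∑ o ∈ Finset.univ.filter (fun o => c o = m), dbar m o * PhiMax (q o))
        - PhiMax (H m))
      ≤ (Fintype.card B : ℝ) * Real.sqrt (2 * Fintype.card A) * Qmax * Real.sqrt εbar := by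
  obtain ⟨o₀⟩ := ‹Nonempty O›
  obtain ⟨p₀⟩ : Nonempty (B × A) := inferInstance
  have hQmax : 0 ≤ Qmax := (hq o₀ p₀).1.trans (hq o₀ p₀).2
  have hε0 : ∀ o, 0 ≤ ε o := fun o => (hε o).symm ▸ cosDist_nonneg _ _
  have hC0 : 0 ≤ (Fintype.card B : ℝ) * √(2 * Fintype.card A) * Qmax := by positivity
  set C := (Fintype.card B : ℝ) * √(2 * Fintype.card A) * Qmax
  have hcluster : ∀ m, (∑ o ∈ univ.filter (fun o => c o = m), dbar m o * PhiMax (q o))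
      - PhiMax (H m) ≤ C * ∑ o ∈ univ.filter (fun o => c o = m), dbar m o * √(ε o) := by
    intro m
    convert sum_mul_phiMax_sub_phiMax_le_of_mem_Icc _ (fun o _ => hdbar m o) hQmax
      (fun o _ => hq o) (hH m) (hH0 m) using 4 with o ho
    rw [hε o, (mem_filter.1 ho).2, cosDist]
  calc _ ≤ ∑ m, dM m * (C * ∑ o ∈ univ.filter (fun o => c o = m), dbar m o * √(ε o)) :=
        sum_le_sum fun m _ => mul_le_mul_of_nonneg_left (hcluster m) (hdM m)
    _ = C * ∑ m, dM m * ∑ o ∈ univ.filter (fun o => c o = m), dbar m o * √(ε o) := by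
        rw [mul_sum]
        exact sum_congr rfl fun m _ => mul_left_comm _ _ _
    _ ≤ C * ∑ m, dM m * √(∑ o ∈ univ.filter (fun o => c o = m), dbar m o * ε o) := by
        gcongr with m
        · exact hdM m
        · exact sum_mul_sqrt_le_sqrt_sum_mul (fun o _ => hdbar m o) (hdbarsum m) fun o _ => hε0 o
    _ ≤ C * √εbar := by
        rw [hεbar]
        gcongr
        exact sum_mul_sqrt_le_sqrt_sum_mul (fun m _ => hdM m) hdMsum fun m _ =>
          sum_nonneg fun o _ => mul_nonneg (hdbar m o) (hε0 o)

theorem clustering_return_gap_bound {B A : Type*} [Fintype B] [Fintype A]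
    [Nonempty B] [Nonempty A]
    {M O : Type*} [Fintype M] [DecidableEq M] [Nonempty M] [Fintype O] [Nonempty O]
    (c : O → M) (Qmax : ℝ)
    (q : O → EuclideanSpace ℝ (B × A)) (hq0 : ∀ o, q o ≠ 0)
    (hq : ∀ o ba, 0 ≤ q o ba ∧ q o ba ≤ Qmax)
    (dM : M → ℝ) (hdM : ∀ m, 0 ≤ dM m) (hdMsum : ∑ m, dM m = 1)
    (dbar : M → O → ℝ) (hdbar : ∀ m o, 0 ≤ dbar m o)
    (hdbarsum : ∀ m, ∑ o ∈ Finset.univ.filter (fun o => c o = m), dbar m o = 1)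
    (H : M → EuclideanSpace ℝ (B × A))
    (hH : ∀ m, H m = ∑ o ∈ Finset.univ.filter (fun o => c o = m), dbar m o • q o)
    (hH0 : ∀ m, H m ≠ 0)
    (ε : O → ℝ) (hε : ∀ o, ε o = 1 - ⟪q o, H (c o)⟫ / (‖q o‖ * ‖H (c o)‖))
    (εbar : ℝ)
    (hεbar : εbar = ∑ m, dM m *
      ∑ o ∈ Finset.univ.filter (fun o => c o = m), dbar m o * ε o) :
    ∑ m, dM m * ((∑ o ∈ Finset.univ.filter (fun o => c o = m), dbar m o * PhiMax (q o))
        - PhiMax (H m))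
      ≤ (Fintype.card B : ℝ) * Real.sqrt (2 * Fintype.card A) * Qmax * Real.sqrt εbar :=
  clustering_return_gap_bound_general c Qmax q hq dM hdM hdMsum dbar hdbar hdbarsum H hH hH0 ε hε
    εbar hεbar
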